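/- On the N-qubit Hilbert space with N ≥ 3 and periodic indexing (site N+1 ≡ 1), define for each j the operator P_j := (i/2)(s_j† s_{j+1} − s_{j+1}† s_j − s_j† s_j + s_{j+1}† s_{j+1}). Then P_j |W⟩ = 0 for every j, and consequently H_ImHop := (i/2) Σ_{j=1}^N (s_j† s_{j+1} − s_{j+1}† s_j) = Σ_{j=1}^N P_j satisfies H_ImHop |W⟩ = 0. Each P_j is not self-adjoint, and P_j† |W⟩ ≠ 0. -/

import Mathlib

open scoped BigOperators

noncomputable section

/-- Configurations of `N` qubits. -/
abbrev Cfg (N : ℕ) := Fin N → Fin 2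

/-- The `N`-qubit Hilbert space `⊗_{j=1}^N ℂ²`, identified with `ℂ^(Fin N → Fin 2)`. -/
abbrev QS (N : ℕ) := EuclideanSpace ℂ (Cfg N)

/-- Computational basis state `|t⟩`. -/
def ket {N : ℕ} (t : Cfg N) : QS N := EuclideanSpace.single t 1

/-- Configuration with a single `1` at site `j`. -/
def eConf {N : ℕ} (j : Fin N) : Cfg N := fun k => if k = j then 1 else 0

/-- The all-zero product state `|0̄⟩`. -/
def zeroKet (N : ℕ) : QS N := ket (fun _ => 0)

/-- The W state `|W⟩ = (1/√N) ∑_j |e_j⟩`. -/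
def Wst (N : ℕ) : QS N := (Real.sqrt N : ℂ)⁻¹ • ∑ j : Fin N, ket (eConf j)

/-- Hard-core boson creation operator `s_j† = |1⟩⟨0|` acting at site `j`. -/
def aDag {N : ℕ} (j : Fin N) : QS N →ₗ[ℂ] QS N where
  toFun ψ := WithLp.toLp 2 (fun s => if s j = 1 then ψ (Function.update s j 0) else 0)
  map_add' ψ φ := by ext s; by_cases h : s j = 1 <;> simp [h]
  map_smul' c ψ := by ext s; by_cases h : s j = 1 <;> simp [h]

/-- Hard-core boson annihilation operator `s_j = |0⟩⟨1|` acting at site `j`. -/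
def aOp {N : ℕ} (j : Fin N) : QS N →ₗ[ℂ] QS N where
  toFun ψ := WithLp.toLp 2 (fun s => if s j = 0 then ψ (Function.update s j 1) else 0)
  map_add' ψ φ := by ext s; by_cases h : s j = 0 <;> simp [h]
  map_smul' c ψ := by ext s; by_cases h : s j = 0 <;> simp [h]

/-- Number operator `n_j = s_j† s_j = |1⟩⟨1|_j`. -/
def nOp {N : ℕ} (j : Fin N) : QS N →ₗ[ℂ] QS N := aDag j ∘ₗ aOp j

/-- The imaginary-hopping Hamiltonian
`H_ImHop = (i/2) ∑_{j=1}^N (s_j† s_{j+1} − s_{j+1}† s_j)` on the periodic chain. -/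
def HImHop (N : ℕ) [NeZero N] : QS N →ₗ[ℂ] QS N :=
  (Complex.I / 2) • ∑ j : Fin N, (aDag j ∘ₗ aOp (j + 1) - aDag (j + 1) ∘ₗ aOp j)

/-- The strictly local non-Hermitian annihilators
`P_j = (i/2)(s_j† s_{j+1} − s_{j+1}† s_j − s_j† s_j + s_{j+1}† s_{j+1})` (periodic indexing). -/
def Pnh {N : ℕ} [NeZero N] (j : Fin N) : QS N →ₗ[ℂ] QS N :=
  (Complex.I / 2) •
    (aDag j ∘ₗ aOp (j + 1) - aDag (j + 1) ∘ₗ aOp j - aDag j ∘ₗ aOp j + aDag (j + 1) ∘ₗ aOp (j + 1))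

/-! On the one-excitation states every hop `s_a† s_b` sends `∑_m |e_m⟩` to `|e_a⟩`, so the four
terms of `P_j` cancel on `|W⟩`, and the number operators in `∑_j P_j` telescope by periodicity.
When `j + 1 ≠ j`, `P_j |e_j⟩ = -(i/2) (|e_j⟩ + |e_{j+1}⟩)`: the diagonal entry `-i/2` is not real,
so `P_j` is not self-adjoint, and `⟨P_j† W, e_j⟩ = ⟨W, P_j e_j⟩ = -i/√N ≠ 0`. -/

theorem Function.update_eq_and_iff {α β : Type*} [DecidableEq α] {f g : α → β} {k : α}
    {a b : β} : (f k = a ∧ Function.update f k b = g) ↔ (g k = b ∧ f = Function.update g k a) := by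
  constructor
  · rintro ⟨h, rfl⟩
    simp [← h]
  · rintro ⟨h, rfl⟩
    simp [← h]

theorem Fin.add_one_ne_self {N : ℕ} [NeZero N] (hN : 2 ≤ N) (j : Fin N) : j + 1 ≠ j := by
  rw [Ne, add_eq_left, Fin.one_eq_zero_iff]
  omega

section

variable {N : ℕ}

theorem ket_apply (t s : Cfg N) : ket t s = if s = t then 1 else 0 := by
  simp [ket]

theorem inner_ket_left (t : Cfg N) (ψ : QS N) : inner ℂ (ket t) ψ = ψ t := by
  simp [ket, EuclideanSpace.inner_single_left]

theorem aOp_apply (k : Fin N) (ψ : QS N) (s : Cfg N) :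
    aOp k ψ s = if s k = 0 then ψ (Function.update s k 1) else 0 := rfl

theorem aDag_apply (k : Fin N) (ψ : QS N) (s : Cfg N) :
    aDag k ψ s = if s k = 1 then ψ (Function.update s k 0) else 0 := rfl

theorem aOp_ket (k : Fin N) (t : Cfg N) :
    aOp k (ket t) = if t k = 1 then ket (Function.update t k 0) else 0 := by
  ext s
  rw [aOp_apply, apply_ite (fun ψ : QS N => ψ s)]
  simp only [ket_apply, ← ite_and, Function.update_eq_and_iff, PiLp.zero_apply]

theorem aDag_ket (k : Fin N) (t : Cfg N) :
    aDag k (ket t) = if t k = 0 then ket (Function.update t k 1) else 0 := by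
  ext s
  rw [aDag_apply, apply_ite (fun ψ : QS N => ψ s)]
  simp only [ket_apply, ← ite_and, Function.update_eq_and_iff, PiLp.zero_apply]

theorem eConf_injective : Function.Injective (eConf (N := N)) := by
  intro a b h
  simpa [eConf] using congrFun h a

theorem ket_eConf_apply_eConf (a b : Fin N) :
    ket (eConf a) (eConf b) = if b = a then 1 else 0 := by
  simp only [ket_apply, eConf_injective.eq_iff]

theorem aOp_ket_eConf (k m : Fin N) :
    aOp k (ket (eConf m)) = if k = m then zeroKet N else 0 := by
  have hupdate : Function.update (eConf m) m 0 = fun _ => 0 := by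
    funext l
    by_cases hl : l = m <;> simp [eConf, hl]
  by_cases hk : k = m
  · simp [aOp_ket, hk, eConf, hupdate, zeroKet]
  · simp [aOp_ket, hk, eConf]

theorem aDag_zeroKet (j : Fin N) : aDag j (zeroKet N) = ket (eConf j) := by
  have hupdate : Function.update (fun _ => 0) j 1 = eConf j := by
    funext l
    by_cases hl : l = j <;> simp [eConf, hl]
  simp [zeroKet, aDag_ket, hupdate]

theorem hop_ket_eConf (a b m : Fin N) :
    (aDag a ∘ₗ aOp b) (ket (eConf m)) = if b = m then ket (eConf a) else 0 := by
  rw [LinearMap.comp_apply, aOp_ket_eConf]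
  split_ifs
  · exact aDag_zeroKet a
  · exact map_zero _

theorem hop_sum_ket_eConf (a b : Fin N) :
    (aDag a ∘ₗ aOp b) (∑ m, ket (eConf m)) = ket (eConf a) := by
  simp [hop_ket_eConf]

theorem inner_sum_ket_eConf (a : Fin N) :
    inner ℂ (∑ m, ket (eConf m)) (ket (eConf a)) = 1 := by
  simp [inner_ket_left, ket_eConf_apply_eConf]

section Periodic

variable [NeZero N]

theorem sum_nOp_add_one : ∑ j : Fin N, nOp (j + 1) = ∑ j : Fin N, nOp j :=
  Equiv.sum_comp (Equiv.addRight 1) nOp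

theorem HImHop_eq_sum_Pnh : HImHop N = ∑ j : Fin N, Pnh j := by
  have hn := sum_nOp_add_one (N := N)
  simp only [nOp] at hn
  simp only [HImHop, Pnh, ← Finset.smul_sum, Finset.sum_add_distrib, Finset.sum_sub_distrib, hn,
    sub_add_cancel]

theorem Pnh_apply_sum_ket_eConf (j : Fin N) : Pnh j (∑ m, ket (eConf m)) = 0 := by
  simp only [Pnh, LinearMap.smul_apply, LinearMap.add_apply, LinearMap.sub_apply,
    hop_sum_ket_eConf, sub_sub_cancel_left, neg_add_cancel, smul_zero]

theorem Pnh_apply_Wst (j : Fin N) : Pnh j (Wst N) = 0 := by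
  rw [Wst, map_smul, Pnh_apply_sum_ket_eConf, smul_zero]

theorem HImHop_apply_Wst : HImHop N (Wst N) = 0 := by
  simp [HImHop_eq_sum_Pnh, Pnh_apply_Wst]

theorem Pnh_apply_ket_eConf_self {j : Fin N} (hj : j + 1 ≠ j) :
    Pnh j (ket (eConf j)) = (-(Complex.I / 2)) • (ket (eConf j) + ket (eConf (j + 1))) := by
  simp only [Pnh, LinearMap.smul_apply, LinearMap.add_apply, LinearMap.sub_apply, hop_ket_eConf,
    if_pos, if_neg hj]
  module

theorem inner_ket_eConf_Pnh_self {j : Fin N} (hj : j + 1 ≠ j) :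
    inner ℂ (ket (eConf j)) (Pnh j (ket (eConf j))) = -(Complex.I / 2) := by
  rw [Pnh_apply_ket_eConf_self hj, inner_ket_left]
  simp [ket_eConf_apply_eConf, hj.symm]

theorem not_isSelfAdjoint_Pnh {j : Fin N} (hj : j + 1 ≠ j) : ¬IsSelfAdjoint (Pnh j) := by
  intro hsa
  have him := ((LinearMap.isSymmetric_iff_isSelfAdjoint _).mpr hsa).im_inner_self_apply
    (ket (eConf j))
  simp [inner_ket_eConf_Pnh_self hj] at him

theorem inner_Wst_Pnh_ket_eConf_self {j : Fin N} (hj : j + 1 ≠ j) :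
    inner ℂ (Wst N) (Pnh j (ket (eConf j))) = -Complex.I * ((√N : ℝ) : ℂ)⁻¹ := by
  rw [Pnh_apply_ket_eConf_self hj, Wst]
  simp only [inner_smul_left, inner_smul_right, inner_add_right, inner_sum_ket_eConf, map_inv₀,
    Complex.conj_ofReal]
  ring

theorem adjoint_Pnh_apply_Wst_ne_zero {j : Fin N} (hj : j + 1 ≠ j) :
    LinearMap.adjoint (Pnh j) (Wst N) ≠ 0 := by
  intro h
  have hinner := inner_Wst_Pnh_ket_eConf_self hj
  rw [← LinearMap.adjoint_inner_left, h, inner_zero_left] at hinner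
  simp [NeZero.ne N] at hinner

end Periodic

end

/-- On the periodic `N`-qubit chain (`N ≥ 3`): each `P_j` annihilates `|W⟩`;
`H_ImHop = ∑_j P_j`, hence `H_ImHop |W⟩ = 0`; each `P_j` is not self-adjoint and
`P_j† |W⟩ ≠ 0`. -/
theorem HImHop_typeII_decomposition (N : ℕ) [NeZero N] (hN : 3 ≤ N) :
    (∀ j : Fin N, Pnh j (Wst N) = 0)
      ∧ HImHop N = ∑ j : Fin N, Pnh j
      ∧ HImHop N (Wst N) = 0
      ∧ (∀ j : Fin N, ¬ IsSelfAdjoint (Pnh j))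
      ∧ (∀ j : Fin N, LinearMap.adjoint (Pnh j) (Wst N) ≠ 0) := by
  have hj : ∀ j : Fin N, j + 1 ≠ j := Fin.add_one_ne_self (by omega)
  exact ⟨Pnh_apply_Wst, HImHop_eq_sum_Pnh, HImHop_apply_Wst,
    fun j => not_isSelfAdjoint_Pnh (hj j), fun j => adjoint_Pnh_apply_Wst_ne_zero (hj j)⟩

end
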